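/- arXiv:1404.0478 — 2 statements merged into one kernel-verified Lean document; each statement's English description precedes it below -/
import Mathlib

section
/- In any epigroup S, for every element x and every natural number n ≥ 1, the pseudoinverse of xⁿ equals x̄ⁿ: (xⁿ)‾ = (x̄)ⁿ. -/
section EpigroupDefs

variable {S : Type*}

/-- `spow x n` is the semigroup power `x^(n+1)` (so `spow x 0 = x`). -/
def spow [Semigroup S] (x : S) : ℕ → S
  | 0 => x
  | n + 1 => spow x n * x

/-- An element of a semigroup is a *group element* if it lies in some subgroup:
a subset closed under multiplication, with a two-sided identity and inverses. -/
def IsGroupElement [Semigroup S] (a : S) : Prop :=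
  ∃ (H : Set S) (e : S), a ∈ H ∧ e ∈ H ∧
    (∀ u ∈ H, ∀ v ∈ H, u * v ∈ H) ∧
    (∀ u ∈ H, e * u = u ∧ u * e = u) ∧
    (∀ u ∈ H, ∃ v ∈ H, u * v = e ∧ v * u = e)

/-- An *epigroup*: a semigroup in which some power of every element is a group
element, equipped with the pseudoinversion `pinv`.  The pseudoinverse `x̄` (the
inverse of `x * x^ω` in the maximal subgroup containing a power of `x`) is
characterized by the listed equational properties: `x x̄ = x̄ x`,
`x̄ x x̄ = x̄`, and `x̄ x^(n+1) = x^n` for some `n`. -/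
class Epigroup (S : Type*) extends Semigroup S where
  pinv : S → S
  pow_isGroupElement : ∀ x : S, ∃ n : ℕ, IsGroupElement (spow x n)
  mul_pinv_comm : ∀ x : S, x * pinv x = pinv x * x
  pinv_mul_mul_pinv : ∀ x : S, pinv x * x * pinv x = pinv x
  pinv_spow : ∀ x : S, ∃ n : ℕ, pinv x * spow x (n + 1) = spow x n

open Epigroup

/-- `x^ω = x * x̄`, the identity element of the maximal subgroup containing a
power of `x`. -/
def eomega [Epigroup S] (x : S) : S := x * pinv x

end EpigroupDefs

open Epigroup

section Aux

variable {S : Type*} [Semigroup S]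

theorem spow_zero' (x : S) : spow x 0 = x := rfl

theorem spow_succ' (x : S) (n : ℕ) : spow x (n+1) = spow x n * x := rfl

theorem mul_spow' (x : S) : ∀ n, x * spow x n = spow x (n+1)
  | 0 => rfl
  | n+1 => by rw [spow_succ', ← mul_assoc, mul_spow' x n]; rfl

theorem spow_add' (x : S) (A : ℕ) : ∀ B, spow x (A + B + 1) = spow x A * spow x B
  | 0 => rfl
  | B+1 => by
    have e1 : A + (B+1) + 1 = (A + B + 1) + 1 := by omega
    rw [e1, spow_succ', spow_add' x A B, spow_succ', mul_assoc]

theorem comm_spow' {a b : S} (h : a * b = b * a) : ∀ n, a * spow b n = spow b n * a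
  | 0 => h
  | n+1 => by rw [spow_succ', ← mul_assoc, comm_spow' h n, mul_assoc, h, ← mul_assoc]

theorem spow_comm_spow' {a b : S} (h : a * b = b * a) (m n : ℕ) :
    spow a m * spow b n = spow b n * spow a m := by
  induction m with
  | zero => exact comm_spow' h n
  | succ m ih => rw [spow_succ', mul_assoc, comm_spow' h n, ← mul_assoc, ih, mul_assoc]

theorem spow_mul_spow' {a b : S} (h : a * b = b * a) : ∀ n, spow (a*b) n = spow a n * spow b n
  | 0 => rfl
  | n+1 => by
    calc spow (a*b) (n+1) = (spow a n * spow b n) * (a * b) := by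
          rw [spow_succ', spow_mul_spow' h n]
      _ = spow a n * ((spow b n * a) * b) := by rw [mul_assoc, mul_assoc]
      _ = spow a n * ((a * spow b n) * b) := by rw [← comm_spow' h n]
      _ = spow a (n+1) * spow b (n+1) := by
          rw [spow_succ', spow_succ', mul_assoc, ← mul_assoc, ← mul_assoc]

theorem spow_spow' (x : S) (A : ℕ) : ∀ B, spow (spow x A) B = spow x (A*B + A + B)
  | 0 => by show spow x A = spow x (A*0 + A + 0); congr 1; omega
  | B+1 => by
    rw [spow_succ', spow_spow' x A B, ← spow_add']
    congr 1; ring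

theorem spow_idem' {e : S} (h : e * e = e) : ∀ n, spow e n = e
  | 0 => rfl
  | n+1 => by rw [spow_succ', spow_idem' h n, h]

theorem red_succ' {a y : S} {m : ℕ} (h : y * spow a (m+1) = spow a m) :
    ∀ j, y * spow a (m+1+j) = spow a (m+j)
  | 0 => h
  | j+1 => by
    have e1 : m+1+(j+1) = (m+1) + j + 1 := by omega
    rw [e1, spow_add', ← mul_assoc, h, ← spow_add']
    congr 1

theorem red_iter' {a y : S} {m : ℕ} (h : y * spow a (m+1) = spow a m) :
    ∀ k j, spow y k * spow a (m+1+k+j) = spow a (m+j)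
  | 0, j => red_succ' h j
  | k+1, j => by
    have e1 : m+1+(k+1)+j = m+1+(k+j+1) := by omega
    have e2 : m+(k+j+1) = m+1+k+j := by omega
    rw [spow_succ', mul_assoc, e1, red_succ' h (k+j+1), e2, red_iter' h k j]

theorem key_lemma {a y z : S} (hc : a * y = y * a) (hy : y * a * y = y)
    (hcz : a * z = z * a) (p : ℕ) (hp : z * spow a (p+1) = spow a p) :
    y = z * (a * y) := by
  have he : (a*y) * (a*y) = a*y := by rw [mul_assoc a y, ← mul_assoc y a y, hy]
  have hye : y * (a * y) = y := by rw [← mul_assoc, hy]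
  calc y = y * (a*y) := hye.symm
    _ = y * spow (a*y) p := by rw [spow_idem' he]
    _ = y * (spow a p * spow y p) := by rw [spow_mul_spow' hc]
    _ = (y * spow a p) * spow y p := by rw [mul_assoc]
    _ = (spow a p * y) * spow y p := by rw [comm_spow' hc.symm]
    _ = spow a p * (y * spow y p) := by rw [mul_assoc]
    _ = spow a p * spow y (p+1) := by rw [mul_spow']
    _ = (z * spow a (p+1)) * spow y (p+1) := by rw [hp]
    _ = z * (spow a (p+1) * spow y (p+1)) := by rw [mul_assoc]
    _ = z * spow (a*y) (p+1) := by rw [spow_mul_spow' hc]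
    _ = z * (a*y) := by rw [spow_idem' he]

end Aux

theorem pinv_unique {S : Type*} [Epigroup S] (a y : S) (hc : a * y = y * a)
    (hy : y * a * y = y) (m : ℕ) (hm : y * spow a (m+1) = spow a m) :
    y = pinv a := by
  set z := pinv a with hzdef
  have hcz : a * z = z * a := mul_pinv_comm a
  have hz : z * a * z = z := by rw [hzdef]; exact pinv_mul_mul_pinv a
  obtain ⟨p, hp0⟩ := pinv_spow a
  have hp : z * spow a (p+1) = spow a p := by rw [hzdef]; exact hp0
  have h1 : y = z * (a * y) := key_lemma hc hy hcz p hp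
  -- e := a*y is absorbed by f := a*z on the left:  f*e = e
  have hfe : (a*z) * (a*y) = a*y := by
    conv_rhs => rw [h1]
    rw [mul_assoc]
  -- and f*e = f
  have hf_e : (a*z) * (a*y) = a*z := by
    have hfidem : (a*z)*(a*z) = a*z := by rw [mul_assoc a z, ← mul_assoc z a z, hz]
    have hae : a*(a*y) = (a*y)*a := by rw [mul_assoc, ← hc]
    have hepow : (a*y) * spow a (m+1) = spow a (m+1) := by rw [mul_assoc, hm, mul_spow']
    calc (a*z)*(a*y)
        = spow (a*z) (m+1) * (a*y) := by rw [spow_idem' hfidem]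
      _ = (spow a (m+1) * spow z (m+1)) * (a*y) := by rw [spow_mul_spow' hcz]
      _ = (spow z (m+1) * spow a (m+1)) * (a*y) := by rw [spow_comm_spow' hcz]
      _ = spow z (m+1) * (spow a (m+1) * (a*y)) := by rw [mul_assoc]
      _ = spow z (m+1) * ((a*y) * spow a (m+1)) := by rw [← comm_spow' hae.symm]
      _ = spow z (m+1) * spow a (m+1) := by rw [hepow]
      _ = spow a (m+1) * spow z (m+1) := by rw [spow_comm_spow' hcz]
      _ = spow (a*z) (m+1) := by rw [spow_mul_spow' hcz]
      _ = a*z := spow_idem' hfidem (m+1)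
  have hef : a*y = a*z := hfe.symm.trans hf_e
  calc y = z * (a*y) := h1
    _ = z * (a*z) := by rw [hef]
    _ = z := by rw [← mul_assoc, hz]

/-- In any epigroup, `(xⁿ)‾ = x̄ⁿ` for all `n ≥ 1`. -/
theorem stmt5 {S : Type*} [Epigroup S] (x : S) (n : ℕ) (hn : 1 ≤ n) :
    pinv (spow x (n - 1)) = spow (pinv x) (n - 1) := by
  set A := n - 1 with hA
  obtain ⟨K, hK⟩ := pinv_spow x
  have hcx : x * pinv x = pinv x * x := mul_pinv_comm x
  refine (pinv_unique (spow x A) (spow (pinv x) A) ?_ ?_ K ?_).symm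
  · exact spow_comm_spow' hcx A A
  · have h2 : (pinv x * x) * pinv x = pinv x * (pinv x * x) := by
      rw [mul_assoc, hcx]
    rw [← spow_mul_spow' hcx.symm, ← spow_mul_spow' h2, pinv_mul_mul_pinv]
  · rw [spow_spow', spow_spow']
    have h := red_iter' hK A (A*K + A)
    have e1 : K+1+A+(A*K+A) = A*(K+1)+A+(K+1) := by ring
    have e2 : K+(A*K+A) = A*K+A+K := by ring
    rw [e1, e2] at h
    exact h
end

section
/- Let S be an epigroup and U, V ∈ S be such that U·c = V·c for all c ∈ S. Then Ū·b = V̄·b for every b ∈ S, where Ū and V̄ denote the pseudoinverses of U and V. -/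
open Epigroup

section DrazinAux

/-- Drazin inverse uniqueness in a monoid. -/
theorem drazin_unique {M : Type*} [Monoid M] (t a b : M)
    (hca : a * t = t * a) (hcb : b * t = t * b)
    (haa : a * t * a = a) (hbb : b * t * b = b)
    (n m : ℕ) (ha : a * t ^ (n + 1) = t ^ n) (hb : b * t ^ (m + 1) = t ^ m) :
    a = b := by
  set k := n + m + 1 with hk
  have hca' : Commute a t := hca
  have hcb' : Commute b t := hcb
  have ha2 : ∀ i, a * t ^ (n + 1 + i) = t ^ (n + i) := by
    intro i; rw [pow_add, ← mul_assoc, ha, ← pow_add]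
  have hb2 : ∀ i, b * t ^ (m + 1 + i) = t ^ (m + i) := by
    intro i; rw [pow_add, ← mul_assoc, hb, ← pow_add]
  have step1 : ∀ j, a = a ^ (j + 1) * t ^ j := by
    intro j
    induction j with
    | zero => simp
    | succ j ih =>
      have haa' : a * a * t = a := by rw [mul_assoc, hca, ← mul_assoc, haa]
      calc a = a * a * t := haa'.symm
        _ = a * (a ^ (j + 1) * t ^ j) * t := by rw [← ih]
        _ = a ^ (j + 2) * t ^ (j + 1) := by
            rw [pow_succ' a (j + 1), pow_succ t j]; simp [mul_assoc]
  have step2 : ∀ i, t ^ k = b ^ i * t ^ (k + i) := by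
    intro i
    induction i with
    | zero => simp
    | succ i ih =>
      have key : t ^ (k + i) = b * t ^ (k + i + 1) := by
        have hh := hb2 (n + i + 1)
        have e1 : m + 1 + (n + i + 1) = k + i + 1 := by omega
        have e2 : m + (n + i + 1) = k + i := by omega
        rw [e1, e2] at hh
        exact hh.symm
      calc t ^ k = b ^ i * t ^ (k + i) := ih
        _ = b ^ i * (b * t ^ (k + i + 1)) := by rw [← key]
        _ = b ^ (i + 1) * t ^ (k + i + 1) := by rw [pow_succ b i, mul_assoc]
  have hak : a * t ^ (k + 1) = t ^ k := by
    have hh := ha2 (m + 1)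
    have e1 : n + 1 + (m + 1) = k + 1 := by omega
    have e2 : n + (m + 1) = k := by omega
    rwa [e1, e2] at hh
  have hfidem : (t * b) * (t * b) = t * b := by
    rw [mul_assoc, ← mul_assoc b t b, hbb]
  have hfpow : ∀ j, (t * b) ^ (j + 1) = t * b := by
    intro j
    induction j with
    | zero => simp
    | succ j ih => rw [pow_succ, ih, hfidem]
  calc a = a ^ (k + 1) * t ^ k := step1 k
    _ = a ^ (k + 1) * (b ^ (k + 1) * t ^ (k + (k + 1))) := by rw [← step2 (k + 1)]
    _ = a ^ (k + 1) * (t ^ (k + (k + 1)) * b ^ (k + 1)) := by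
        rw [(hcb'.pow_pow (k + 1) (k + (k + 1))).eq]
    _ = (a ^ (k + 1) * t ^ k * t ^ (k + 1)) * b ^ (k + 1) := by
        rw [pow_add t k (k + 1)]; simp [mul_assoc]
    _ = (a * t ^ (k + 1)) * b ^ (k + 1) := by rw [← step1 k]
    _ = t ^ k * b ^ (k + 1) := by rw [hak]
    _ = (t ^ k * b ^ k) * b := by rw [pow_succ b k, mul_assoc]
    _ = (t * b) ^ k * b := by rw [(hcb'.symm).mul_pow k]
    _ = (t * b) * b := by rw [show k = (n + m) + 1 from rfl, hfpow]
    _ = b := by rw [← hcb]; exact hbb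

end DrazinAux

theorem stmt12_aux {S : Type*} [Epigroup S] (U V : S) (h : ∀ c : S, U * c = V * c) :
    ∀ b : S, pinv U * b = pinv V * b := by
  classical
  let φ : S → Function.End S := fun x => fun s => x * s
  have φmul : ∀ x y : S, φ (x * y) = φ x * φ y := by
    intro x y; funext s
    show (x * y) * s = x * (y * s)
    rw [mul_assoc]
  have φspow : ∀ (x : S) (j : ℕ), φ (spow x j) = (φ x) ^ (j + 1) := by
    intro x j
    induction j with
    | zero => simp [spow]
    | succ j ih =>
      show φ (spow x j * x) = (φ x) ^ (j + 1 + 1)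
      rw [φmul, ih, ← pow_succ]
  have hTV : φ U = φ V := by funext s; exact h s
  obtain ⟨n, hn⟩ := Epigroup.pinv_spow U
  obtain ⟨m, hm⟩ := Epigroup.pinv_spow V
  have key : φ (pinv U) = φ (pinv V) := by
    refine drazin_unique (φ U) (φ (pinv U)) (φ (pinv V)) ?_ ?_ ?_ ?_ (n + 1) (m + 1) ?_ ?_
    · rw [← φmul, ← φmul, Epigroup.mul_pinv_comm]
    · rw [hTV, ← φmul, ← φmul, Epigroup.mul_pinv_comm]
    · rw [← φmul, ← φmul, Epigroup.pinv_mul_mul_pinv]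
    · rw [hTV, ← φmul, ← φmul, Epigroup.pinv_mul_mul_pinv]
    · rw [← φspow U (n + 1), ← φspow U n, ← φmul, hn]
    · rw [hTV, ← φspow V (m + 1), ← φspow V m, ← φmul, hm]
  intro b
  exact congrFun key b

/-- If `U c = V c` for all `c` in an epigroup, then `Ū b = V̄ b` for all `b`. -/
theorem stmt12 {S : Type*} [Epigroup S] (U V : S) (h : ∀ c : S, U * c = V * c) :
    ∀ b : S, pinv U * b = pinv V * b := stmt12_aux U V h
end
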